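/- arXiv:2006.02127 — 5 statements merged into one kernel-verified Lean document; each statement's English description precedes it below -/
import Mathlib

section
/- Let N > 0, 0 < γ* ≤ 1, 0 ≤ R_f < N, and β*, β₀ > 0. Suppose for every t with 0 ≤ R_t ≤ R_f we have (1 - R_t/(γ* N))β* = (1 - R_t/N)β₀(t) where β₀(t) > 0 is the fitted rate. Then with ε = R_f(1-γ*)/(γ*(N - R_f)), for all such t, 0 ≤ (β* - β₀(t))/β* ≤ ε. -/
/-!
Clearing denominators in the indistinguishability equation gives the relative error in closed form,
`(β* - β₀)/β* = R (1 - γ*) / (γ* (N - R))`, which is nonnegative and increasing in `R` on `[0, N)`;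
evaluating at `R = R_f` gives `ε`.
-/

noncomputable def relUnderestimate (γ N R : ℝ) : ℝ :=
  R * (1 - γ) / (γ * (N - R))

theorem relUnderestimate_nonneg {γ N R : ℝ} (hγ0 : 0 ≤ γ) (hγ1 : γ ≤ 1) (hR : 0 ≤ R)
    (hRN : R < N) : 0 ≤ relUnderestimate γ N R :=
  div_nonneg (mul_nonneg hR (sub_nonneg.mpr hγ1)) (mul_nonneg hγ0 (sub_nonneg.mpr hRN.le))

theorem relUnderestimate_mono {γ N R R' : ℝ} (hγ0 : 0 ≤ γ) (hγ1 : γ ≤ 1) (hR : 0 ≤ R)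
    (hRR' : R ≤ R') (hR'N : R' < N) : relUnderestimate γ N R ≤ relUnderestimate γ N R' := by
  have hfrac : R / (N - R) ≤ R' / (N - R') := by
    rw [div_le_div_iff₀ (by linarith) (by linarith)]
    nlinarith
  have hcoef : 0 ≤ (1 - γ) / γ := div_nonneg (sub_nonneg.mpr hγ1) hγ0
  calc relUnderestimate γ N R = (1 - γ) / γ * (R / (N - R)) := by
        rw [relUnderestimate, div_mul_div_comm, mul_comm R]
    _ ≤ (1 - γ) / γ * (R' / (N - R')) := mul_le_mul_of_nonneg_left hfrac hcoef
    _ = relUnderestimate γ N R' := by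
        rw [relUnderestimate, div_mul_div_comm, mul_comm R']

theorem relError_eq_relUnderestimate {γ N R β β₀ : ℝ} (hγ : γ ≠ 0) (hN : N ≠ 0) (hβ : β ≠ 0)
    (hRN : N - R ≠ 0) (h : (1 - R / (γ * N)) * β = (1 - R / N) * β₀) :
    (β - β₀) / β = relUnderestimate γ N R := by
  have hcleared : (γ * N - R) * β = γ * (N - R) * β₀ := by
    field_simp at h
    exact mul_left_cancel₀ hN (by linear_combination N * h)
  rw [relUnderestimate, div_eq_div_iff hβ (mul_ne_zero hγ hRN)]
  linear_combination hcleared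

theorem stmt_1_general (N γstar Rf βstar : ℝ) (R β0 : ℕ → ℝ)
    (hN : 0 < N) (hγ0 : 0 < γstar) (hγ1 : γstar ≤ 1)
    (hRfN : Rf < N) (hβstar : 0 < βstar)
    (heq : ∀ t, 0 ≤ R t → R t ≤ Rf →
      (1 - R t / (γstar * N)) * βstar = (1 - R t / N) * β0 t) :
    ∀ t, 0 ≤ R t → R t ≤ Rf →
      0 ≤ (βstar - β0 t) / βstar ∧
      (βstar - β0 t) / βstar ≤ Rf * (1 - γstar) / (γstar * (N - Rf)) := by
  intro t h0 h1
  have hRN : R t < N := h1.trans_lt hRfN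
  rw [relError_eq_relUnderestimate hγ0.ne' hN.ne' hβstar.ne' (sub_ne_zero.mpr hRN.ne')
    (heq t h0 h1)]
  exact ⟨relUnderestimate_nonneg hγ0.le hγ1 h0 hRN,
    relUnderestimate_mono hγ0.le hγ1 h0 h1 hRfN⟩

theorem stmt_1 (N γstar Rf βstar : ℝ) (R β0 : ℕ → ℝ)
    (hN : 0 < N) (hγ0 : 0 < γstar) (hγ1 : γstar ≤ 1)
    (hRf0 : 0 ≤ Rf) (hRfN : Rf < N) (hβstar : 0 < βstar)
    (hβ0pos : ∀ t, 0 ≤ R t → R t ≤ Rf → 0 < β0 t)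
    (heq : ∀ t, 0 ≤ R t → R t ≤ Rf →
      (1 - R t / (γstar * N)) * βstar = (1 - R t / N) * β0 t) :
    ∀ t, 0 ≤ R t → R t ≤ Rf →
      0 ≤ (βstar - β0 t) / βstar ∧
      (βstar - β0 t) / βstar ≤ Rf * (1 - γstar) / (γstar * (N - Rf)) :=
  stmt_1_general N γstar Rf βstar R β0 hN hγ0 hγ1 hRfN hβstar heq
end

section
/- Let N > 0, β₁ > β₂ > 0, 0 < γ̄₁ ≤ 1, R_t > 0 with R_t > γ̄₁N(1 - β₂/β₁), and define γ̄₂ = (β₂/β₁)γ̄₁R_t / (R_t - (1 - β₂/β₁)γ̄₁N). Then γ̄₂ ≤ 1 if and only if R_t ≥ γ̄₁N(1 - β₂/β₁)/(1 - (β₂/β₁)γ̄₁). -/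
/-- Clearing the two positive denominators turns both sides into `(1 - r) γ N ≤ (1 - r γ) R`. -/
theorem mul_div_sub_le_one_iff {r γ N R : ℝ} (hD : 0 < R - (1 - r) * γ * N)
    (hrγ : 0 < 1 - r * γ) :
    r * γ * R / (R - (1 - r) * γ * N) ≤ 1 ↔ γ * N * (1 - r) / (1 - r * γ) ≤ R := by
  rw [div_le_one hD, div_le_iff₀ hrγ]
  constructor <;> intro h <;> linarith

theorem stmt_4_general (N β1 β2 γ1 Rt : ℝ)
    (hβ2 : 0 < β2) (hβ12 : β2 < β1)
    (hγ1 : γ1 ≤ 1)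
    (hpos : Rt > γ1 * N * (1 - β2 / β1)) :
    (β2 / β1) * γ1 * Rt / (Rt - (1 - β2 / β1) * γ1 * N) ≤ 1 ↔
      Rt ≥ γ1 * N * (1 - β2 / β1) / (1 - (β2 / β1) * γ1) := by
  have hβ1 : 0 < β1 := hβ2.trans hβ12
  have hr_lt_one : β2 / β1 < 1 := (div_lt_one hβ1).mpr hβ12
  have hrγ_le_r : β2 / β1 * γ1 ≤ β2 / β1 := mul_le_of_le_one_right (div_pos hβ2 hβ1).le hγ1
  have hD : 0 < Rt - (1 - β2 / β1) * γ1 * N := by linarith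
  exact mul_div_sub_le_one_iff hD (by linarith)

theorem stmt_4 (N β1 β2 γ1 Rt : ℝ)
    (hN : 0 < N) (hβ2 : 0 < β2) (hβ12 : β2 < β1)
    (hγ0 : 0 < γ1) (hγ1 : γ1 ≤ 1) (hRt : 0 < Rt)
    (hpos : Rt > γ1 * N * (1 - β2 / β1)) :
    (β2 / β1) * γ1 * Rt / (Rt - (1 - β2 / β1) * γ1 * N) ≤ 1 ↔
      Rt ≥ γ1 * N * (1 - β2 / β1) / (1 - (β2 / β1) * γ1) :=
  stmt_4_general N β1 β2 γ1 Rt hβ2 hβ12 hγ1 hpos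
end

section
/- Let N > 0, 0 < γ̄₁ ≤ 1, β₁ > β₂ > 0 with (β₂/β₁)γ̄₁ < 1. Define R_τ = γ̄₁N(1 - β₂/β₁)/(1 - (β₂/β₁)γ̄₁). Then for every R with R_τ < R < N, the value γ̄₂ = (β₂/β₁)γ̄₁R / (R - (1 - β₂/β₁)γ̄₁N) satisfies 0 < γ̄₂ ≤ 1 and (1 - R/(γ̄₁N))β₁ = (1 - R/(γ̄₂N))β₂. -/
/-!
Write `c = β₂/β₁ ∈ (0, 1)`. Solving `(1 - R/(γ̄₁N)) β₁ = (1 - R/(γ̄₂N)) β₂` for `γ̄₂` gives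
`γ̄₂ = c γ̄₁ R / (R - (1 - c) γ̄₁ N)`, and the threshold condition `R_τ < R` is exactly the
inequality `c γ̄₁ R < R - (1 - c) γ̄₁ N` between its numerator and denominator, which makes `γ̄₂`
a probability.
-/

/-- The reporting probability `γ̄₂` that makes rate `c β₁` fit the cumulative count `R` as well as
`(β₁, γ̄₁)` does, where `c = β₂/β₁`. -/
noncomputable def matchingReportProb (c γ N R : ℝ) : ℝ :=
  c * γ * R / (R - (1 - c) * γ * N)

theorem threshold_lt_iff {c γ N R : ℝ} (hgap : 0 < 1 - c * γ) :
    γ * N * (1 - c) / (1 - c * γ) < R ↔ c * γ * R < R - (1 - c) * γ * N := by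
  rw [div_lt_iff₀ hgap]
  constructor <;> intro h <;> linarith

section

variable {c γ N R : ℝ}

theorem matchingReportProb_pos (hc : 0 < c) (hγ : 0 < γ) (hR : 0 < R)
    (hsep : c * γ * R < R - (1 - c) * γ * N) : 0 < matchingReportProb c γ N R := by
  have hnum : 0 < c * γ * R := by positivity
  exact div_pos hnum (hnum.trans hsep)

theorem matchingReportProb_le_one (hc : 0 < c) (hγ : 0 < γ) (hR : 0 < R)
    (hsep : c * γ * R < R - (1 - c) * γ * N) : matchingReportProb c γ N R ≤ 1 := by
  have hnum : 0 < c * γ * R := by positivity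
  exact (div_le_one (hnum.trans hsep)).2 hsep.le

theorem mul_one_sub_div_matchingReportProb (hc : c ≠ 0) (hγ : γ ≠ 0) (hN : N ≠ 0) (hR : R ≠ 0) :
    c * (1 - R / (matchingReportProb c γ N R * N)) = 1 - R / (γ * N) := by
  unfold matchingReportProb
  field_simp
  ring

end

theorem stmt_5_general (N β1 β2 γ1 : ℝ)
    (hN : 0 < N) (hβ2 : 0 < β2) (hβ12 : β2 < β1)
    (hγ0 : 0 < γ1) (hprod : (β2 / β1) * γ1 < 1) :
    ∀ R : ℝ, γ1 * N * (1 - β2 / β1) / (1 - (β2 / β1) * γ1) < R → R < N →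
      0 < (β2 / β1) * γ1 * R / (R - (1 - β2 / β1) * γ1 * N) ∧
      (β2 / β1) * γ1 * R / (R - (1 - β2 / β1) * γ1 * N) ≤ 1 ∧
      (1 - R / (γ1 * N)) * β1 =
        (1 - R / (((β2 / β1) * γ1 * R / (R - (1 - β2 / β1) * γ1 * N)) * N)) * β2 := by
  intro R hR _
  have hβ1 : 0 < β1 := hβ2.trans hβ12
  have hc0 : 0 < β2 / β1 := div_pos hβ2 hβ1
  have hc1 : β2 / β1 < 1 := (div_lt_one hβ1).2 hβ12
  have hgap : 0 < 1 - β2 / β1 * γ1 := sub_pos.2 hprod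
  have hRpos : 0 < R :=
    (div_pos (mul_pos (mul_pos hγ0 hN) (sub_pos.2 hc1)) hgap).trans hR
  have hsep := (threshold_lt_iff hgap).1 hR
  refine ⟨matchingReportProb_pos hc0 hγ0 hRpos hsep,
    matchingReportProb_le_one hc0 hγ0 hRpos hsep, ?_⟩
  have hbalance := mul_one_sub_div_matchingReportProb hc0.ne' hγ0.ne' hN.ne' hRpos.ne'
  calc (1 - R / (γ1 * N)) * β1
      = β2 / β1 * β1 * (1 - R / (matchingReportProb (β2 / β1) γ1 N R * N)) := by
        rw [← hbalance, mul_right_comm]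
    _ = (1 - R / (matchingReportProb (β2 / β1) γ1 N R * N)) * β2 := by
        rw [div_mul_cancel₀ _ hβ1.ne', mul_comm]

theorem stmt_5 (N β1 β2 γ1 : ℝ)
    (hN : 0 < N) (hβ2 : 0 < β2) (hβ12 : β2 < β1)
    (hγ0 : 0 < γ1) (hγ1 : γ1 ≤ 1) (hprod : (β2 / β1) * γ1 < 1) :
    ∀ R : ℝ, γ1 * N * (1 - β2 / β1) / (1 - (β2 / β1) * γ1) < R → R < N →
      0 < (β2 / β1) * γ1 * R / (R - (1 - β2 / β1) * γ1 * N) ∧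
      (β2 / β1) * γ1 * R / (R - (1 - β2 / β1) * γ1 * N) ≤ 1 ∧
      (1 - R / (γ1 * N)) * β1 =
        (1 - R / (((β2 / β1) * γ1 * R / (R - (1 - β2 / β1) * γ1 * N)) * N)) * β2 :=
  stmt_5_general N β1 β2 γ1 hN hβ2 hβ12 hγ0 hprod
end

section
/- Let N > 0, 0 < ε < 1, β*, β₀ > 0 with β* ≥ β₀ ≥ (1-ε)β*, and 0 < γ* ≤ γ₀ ≤ 1, R_t > 0. Suppose γ₀ = γ*(β₀/β*)(R_t/N) / (R_t/N - (1 - β₀/β*)γ*). If for some 0 < δ < 1 we had γ* < (1-δ)γ₀, then R_t < Nεγ₀/δ. Consequently, if R_t ≥ Nεγ₀/δ then γ* ≥ (1-δ)γ₀. -/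
/-!
Write `b = β₀/β*` and `r = R_t/N`. Clearing the denominator of the indistinguishability relation
gives `r (γ₀ - b γ*) = γ₀ γ* (1 - b)`. If `γ* < (1 - δ) γ₀` then `γ₀ - b γ* > δ γ₀`, so
`r δ < γ* (1 - b) ≤ ε γ₀`, because early fitting gives `1 - b ≤ ε`.
-/

theorem mul_sub_eq_of_eq_div_sub {γ₀ γ b r : ℝ} (hγ₀ : γ₀ ≠ 0)
    (hrel : γ₀ = γ * b * r / (r - (1 - b) * γ)) :
    r * (γ₀ - b * γ) = γ₀ * γ * (1 - b) := by
  have hden : r - (1 - b) * γ ≠ 0 := by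
    rintro hden
    rw [hden, div_zero] at hrel
    exact hγ₀ hrel
  rw [eq_div_iff hden] at hrel
  linear_combination hrel

theorem mul_lt_of_lt_one_sub_mul {γ₀ γ b r δ : ℝ} (hr : 0 < r) (hγ : 0 < γ) (hγ₀ : 0 < γ₀)
    (hb : b ≤ 1) (hkey : r * (γ₀ - b * γ) = γ₀ * γ * (1 - b)) (hlt : γ < (1 - δ) * γ₀) :
    r * δ < γ * (1 - b) := by
  have hgap : δ * γ₀ < γ₀ - b * γ := by
    have : b * γ ≤ γ := mul_le_of_le_one_left hγ.le hb
    linarith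
  have : γ₀ * (r * δ) < γ₀ * (γ * (1 - b)) :=
    calc γ₀ * (r * δ) = r * (δ * γ₀) := by ring
      _ < r * (γ₀ - b * γ) := mul_lt_mul_of_pos_left hgap hr
      _ = γ₀ * (γ * (1 - b)) := by rw [hkey]; ring
  exact lt_of_mul_lt_mul_left this hγ₀.le

theorem stmt_6_general (N ε βstar β0 γstar γ0 Rt : ℝ)
    (hN : 0 < N)
    (hβstar : 0 < βstar)
    (hβle : β0 ≤ βstar) (hβge : (1 - ε) * βstar ≤ β0)
    (hγstar : 0 < γstar) (hγle : γstar ≤ γ0)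
    (hRt : 0 < Rt)
    (hrel : γ0 = γstar * (β0 / βstar) * (Rt / N) /
      (Rt / N - (1 - β0 / βstar) * γstar)) :
    (∀ δ : ℝ, 0 < δ → δ < 1 → γstar < (1 - δ) * γ0 → Rt < N * ε * γ0 / δ) ∧
    (∀ δ : ℝ, 0 < δ → δ < 1 → N * ε * γ0 / δ ≤ Rt → (1 - δ) * γ0 ≤ γstar) := by
  have hγ0 : 0 < γ0 := hγstar.trans_le hγle
  have hb : β0 / βstar ≤ 1 := (div_le_one hβstar).2 hβle
  have hbε : 1 - β0 / βstar ≤ ε := by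
    rw [sub_le_comm, le_div_iff₀ hβstar]
    linarith
  have hkey := mul_sub_eq_of_eq_div_sub hγ0.ne' hrel
  have hRt_lt : ∀ δ, 0 < δ → γstar < (1 - δ) * γ0 → Rt < N * ε * γ0 / δ := by
    intro δ hδ hlt
    have hεγ : Rt / N * δ < ε * γ0 :=
      calc Rt / N * δ < γstar * (1 - β0 / βstar) :=
            mul_lt_of_lt_one_sub_mul (div_pos hRt hN) hγstar hγ0 hb hkey hlt
        _ ≤ γ0 * ε := mul_le_mul hγle hbε (by linarith) hγ0.le
        _ = ε * γ0 := mul_comm _ _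
    rw [lt_div_iff₀ hδ]
    calc Rt * δ = N * (Rt / N * δ) := by field_simp
      _ < N * (ε * γ0) := mul_lt_mul_of_pos_left hεγ hN
      _ = N * ε * γ0 := by ring
  exact ⟨fun δ hδ _ => hRt_lt δ hδ,
    fun δ hδ _ hR => le_of_not_gt fun hlt => (hRt_lt δ hδ hlt).not_ge hR⟩

theorem stmt_6 (N ε βstar β0 γstar γ0 Rt : ℝ)
    (hN : 0 < N) (hε0 : 0 < ε) (hε1 : ε < 1)
    (hβstar : 0 < βstar) (hβ0 : 0 < β0)
    (hβle : β0 ≤ βstar) (hβge : (1 - ε) * βstar ≤ β0)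
    (hγstar : 0 < γstar) (hγle : γstar ≤ γ0) (hγ1 : γ0 ≤ 1)
    (hRt : 0 < Rt)
    (hrel : γ0 = γstar * (β0 / βstar) * (Rt / N) /
      (Rt / N - (1 - β0 / βstar) * γstar)) :
    (∀ δ : ℝ, 0 < δ → δ < 1 → γstar < (1 - δ) * γ0 → Rt < N * ε * γ0 / δ) ∧
    (∀ δ : ℝ, 0 < δ → δ < 1 → N * ε * γ0 / δ ≤ Rt → (1 - δ) * γ0 ≤ γstar) :=
  stmt_6_general N ε βstar β0 γstar γ0 Rt hN hβstar hβle hβge hγstar hγle hRt hrel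
end

section
/- Let N > 0 and 0 < γ ≤ 1, 0 ≤ ρ < 1. Suppose the actual epidemic satisfies ΔI_t = ((((1-ρ)N - I_t)/((1-ρ)N))·Σ_{i=1}^k βᵢ(I_{t-(i-1)J} - I_{t-iJ}) and reported cases satisfy R_t = γI_t for all t. Then with γ̄ = γ(1-ρ), the reported series satisfies ΔR_t = (1 - R_t/(γ̄N))·Σ_{i=1}^k βᵢ(R_{t-(i-1)J} - R_{t-iJ}). -/
/-! The model equation `ΔX_t = (1 - X_t / K) · Σᵢ βᵢ (X_{t-(i-1)J} - X_{t-iJ})` is invariant under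
rescaling `X ↦ c X`, `K ↦ c K`: the sum is linear in `X` and `X_t / K` is scale-free. Reported cases
are the actual ones rescaled by `γ`, with active population `K = (1 - ρ) N`, so they follow the model
with capacity `γ (1 - ρ) N`. -/

open Finset

/-- Indexed from `0`, where the paper's sum runs over `i = 1, …, k`. -/
def laggedIncrementSum (β : ℕ → ℝ) (k J : ℕ) (X : ℤ → ℝ) (t : ℤ) : ℝ :=
  ∑ i ∈ range k, β i * (X (t - (i : ℤ) * (J : ℤ)) - X (t - ((i : ℤ) + 1) * (J : ℤ)))

/-- `K` is the active population `(1 - ρ) N` of the paper. -/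
def IsSIkJSolution (K : ℝ) (β : ℕ → ℝ) (k J : ℕ) (X : ℤ → ℝ) : Prop :=
  ∀ t : ℤ, X t - X (t - 1) = (1 - X t / K) * laggedIncrementSum β k J X t

lemma laggedIncrementSum_const_mul (β : ℕ → ℝ) (k J : ℕ) (X : ℤ → ℝ) (c : ℝ) (t : ℤ) :
    laggedIncrementSum β k J (fun s => c * X s) t = c * laggedIncrementSum β k J X t := by
  rw [laggedIncrementSum, laggedIncrementSum, mul_sum]
  exact sum_congr rfl fun i _ => by ring

lemma IsSIkJSolution.const_mul {K : ℝ} {β : ℕ → ℝ} {k J : ℕ} {X : ℤ → ℝ}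
    (hX : IsSIkJSolution K β k J X) (c : ℝ) :
    IsSIkJSolution (c * K) β k J (fun s => c * X s) := by
  intro t
  rw [laggedIncrementSum_const_mul]
  rcases eq_or_ne c 0 with rfl | hc
  · simp
  · rw [mul_div_mul_left _ _ hc, ← mul_sub, hX t]
    ring

theorem stmt_17_general (N ρ γ : ℝ) (k J : ℕ) (β : ℕ → ℝ) (I R : ℤ → ℝ)
    (hN : 0 < N) (hρ1 : ρ < 1)
    (hI : ∀ t : ℤ, I t - I (t - 1) =
      (((1 - ρ) * N - I t) / ((1 - ρ) * N)) *
        ∑ i ∈ Finset.range k, β i * (I (t - (i : ℤ) * (J : ℤ)) - I (t - ((i : ℤ) + 1) * (J : ℤ))))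
    (hR : ∀ t : ℤ, R t = γ * I t) :
    ∀ t : ℤ, R t - R (t - 1) =
      (1 - R t / ((γ * (1 - ρ)) * N)) *
        ∑ i ∈ Finset.range k, β i * (R (t - (i : ℤ) * (J : ℤ)) - R (t - ((i : ℤ) + 1) * (J : ℤ))) := by
  have hK : (1 - ρ) * N ≠ 0 := mul_ne_zero (sub_ne_zero.mpr hρ1.ne') hN.ne'
  have hIsol : IsSIkJSolution ((1 - ρ) * N) β k J I := fun t => by
    rw [one_sub_div hK]
    exact hI t
  obtain rfl : R = fun t => γ * I t := funext hR
  rw [mul_assoc]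
  exact hIsol.const_mul γ

theorem stmt_17 (N ρ γ : ℝ) (k J : ℕ) (β : ℕ → ℝ) (I R : ℤ → ℝ)
    (hN : 0 < N) (hγ0 : 0 < γ) (hγ1 : γ ≤ 1) (hρ0 : 0 ≤ ρ) (hρ1 : ρ < 1)
    (hI : ∀ t : ℤ, I t - I (t - 1) =
      (((1 - ρ) * N - I t) / ((1 - ρ) * N)) *
        ∑ i ∈ Finset.range k, β i * (I (t - (i : ℤ) * (J : ℤ)) - I (t - ((i : ℤ) + 1) * (J : ℤ))))
    (hR : ∀ t : ℤ, R t = γ * I t) :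
    ∀ t : ℤ, R t - R (t - 1) =
      (1 - R t / ((γ * (1 - ρ)) * N)) *
        ∑ i ∈ Finset.range k, β i * (R (t - (i : ℤ) * (J : ℤ)) - R (t - ((i : ℤ) + 1) * (J : ℤ))) :=
  stmt_17_general N ρ γ k J β I R hN hρ1 hI hR
end
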